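/- Let U be a split extension of an S-module A by an inverse semigroup S, and let k, k' be splittings corresponding to 1-cocycles g, g' ∈ Z¹(S¹,A¹) (via k(s) = g(s) δ_s after identifying U with A ∗_{(α,λ)} S). Then k' is C⁰_≤-equivalent to k (i.e., k'(s) = i(h(s s⁻¹)) k(s) i(h(s⁻¹ s))⁻¹ for some order-preserving h : E(S) → A with h(e) ∈ A_{α(e)}) if and only if g'(s) = g(s) λ_s(p(s⁻¹ s)) p(s s⁻¹)⁻¹ for some p ∈ C⁰_≤(S¹,A¹). Consequently, the C⁰_≤-equivalence classes of splittings of U are in bijection with H¹_≤(S¹,A¹). -/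
import Mathlib


/-- An inverse semigroup: every element has a unique (generalized) inverse. -/
class InverseSemigroup (S : Type*) extends Semigroup S, Inv S where
  mul_inv_mul : ∀ a : S, a * a⁻¹ * a = a
  inv_mul_inv : ∀ a : S, a⁻¹ * a * a⁻¹ = a⁻¹
  inv_unique : ∀ a b : S, a * b * a = a → b * a * b = b → b = a⁻¹

/-- `e` is an idempotent. -/
def IsIdem {S : Type*} [Mul S] (e : S) : Prop := e * e = e

/-- The natural partial order on an inverse semigroup: `a ≤ b` iff `a = e * b`
for some idempotent `e`. -/
def NatLe {S : Type*} [Mul S] (a b : S) : Prop := ∃ e, IsIdem e ∧ a = e * b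

/-- An `S`-module structure `(α, λ)` on a semilattice of abelian groups `A`
(modelled as a commutative inverse semigroup): `α` is an isomorphism
`E(S) → E(A)` and `lam` is a homomorphism of `S` into endomorphisms of `A`
satisfying `λ_e(a) = α(e)a` and `λ_s(α(e)) = α(s e s⁻¹)`. -/
structure SMod (S A : Type*) [InverseSemigroup S] [InverseSemigroup A] where
  α : S → A
  lam : S → A → A
  α_idem : ∀ e : S, IsIdem e → IsIdem (α e)
  α_mul : ∀ e f : S, IsIdem e → IsIdem f → α (e * f) = α e * α f
  α_inj : ∀ e f : S, IsIdem e → IsIdem f → α e = α f → e = f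
  α_surj : ∀ g : A, IsIdem g → ∃ e : S, IsIdem e ∧ α e = g
  lam_mul : ∀ (s : S) (a b : A), lam s (a * b) = lam s a * lam s b
  lam_idem : ∀ e : S, IsIdem e → ∀ a : A, lam e a = α e * a
  lam_alpha : ∀ (s e : S), IsIdem e → lam s (α e) = α (s * e * s⁻¹)
  lam_comp : ∀ (s t : S) (a : A), lam s (lam t a) = lam (s * t) a

/-- Multiplication of the crossed product `A ∗_{(α,λ)} S` (trivial twisting). -/
def cp0mul {S A : Type*} [InverseSemigroup S] [InverseSemigroup A]
    (M : SMod S A) (p q : A × S) : A × S :=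
  (p.1 * M.lam p.2 q.1, p.2 * q.2)

/-- Inversion in `A ∗_{(α,λ)} S`: `(aδ_s)⁻¹ = λ_{s⁻¹}(a⁻¹) δ_{s⁻¹}`. -/
def cp0inv {S A : Type*} [InverseSemigroup S] [InverseSemigroup A]
    (M : SMod S A) (p : A × S) : A × S :=
  (M.lam p.2⁻¹ p.1⁻¹, p.2⁻¹)

/-- Membership in `C⁰_≤(S¹,A¹)`: order-preserving `h : E(S) → A` with
`h(e) ∈ A_{α(e)}`. -/
def IsC0 {S A : Type*} [InverseSemigroup S] [InverseSemigroup A]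
    (M : SMod S A) (h : S → A) : Prop :=
  (∀ e : S, IsIdem e → h e * (h e)⁻¹ = M.α e) ∧
  (∀ e e' : S, IsIdem e → IsIdem e' → NatLe e e' → NatLe (h e) (h e'))

/-- Membership in `Z¹(S¹,A¹)`. -/
def IsZ1 {S A : Type*} [InverseSemigroup S] [InverseSemigroup A]
    (M : SMod S A) (g : S → A) : Prop :=
  (∀ s : S, g s * (g s)⁻¹ = M.α (s * s⁻¹)) ∧
  (∀ s t : S, g (s * t) = g s * M.lam s (g t))

/-- A splitting of `A ∗_{(α,λ)} S`. -/
def IsSplitting {S A : Type*} [InverseSemigroup S] [InverseSemigroup A]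
    (M : SMod S A) (K : S → A × S) : Prop :=
  (∀ s : S, (K s).2 = s) ∧
  (∀ s : S, (K s).1 * (K s).1⁻¹ = M.α (s * s⁻¹)) ∧
  (∀ s t : S, K (s * t) = cp0mul M (K s) (K t)) ∧
  (∀ e : S, IsIdem e → cp0mul M (K e) (K e) = K e)

/-- `C⁰_≤`-equivalence of splittings:
`K'(s) = i(h(ss⁻¹)) K(s) i(h(s⁻¹s))⁻¹` for some `h ∈ C⁰_≤(S¹,A¹)`
(computed in `A ∗_{(α,λ)} S`, where `i(h(e)) = h(e)δ_e`). -/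
def C0Equiv {S A : Type*} [InverseSemigroup S] [InverseSemigroup A]
    (M : SMod S A) (K K' : S → A × S) : Prop :=
  ∃ h : S → A, IsC0 M h ∧ ∀ s : S,
    K' s = cp0mul M (cp0mul M (h (s * s⁻¹), s * s⁻¹) (K s))
      (cp0inv M (h (s⁻¹ * s), s⁻¹ * s))

/-- `B¹_≤`-equivalence of 1-cocycles:
`g'(s) = g(s) λ_s(p(s⁻¹s)) p(ss⁻¹)⁻¹` for some `p ∈ C⁰_≤(S¹,A¹)`. -/
def B1Equiv {S A : Type*} [InverseSemigroup S] [InverseSemigroup A]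
    (M : SMod S A) (g g' : S → A) : Prop :=
  ∃ p : S → A, IsC0 M p ∧
    ∀ s : S, g' s = g s * M.lam s (p (s⁻¹ * s)) * (p (s * s⁻¹))⁻¹


section Helpers

variable {S A : Type*} [InverseSemigroup S] [InverseSemigroup A]

open InverseSemigroup

lemma isg_inv_inv (a : S) : a⁻¹⁻¹ = a :=
  (inv_unique a⁻¹ a (inv_mul_inv a) (mul_inv_mul a)).symm

lemma isg_idem_inv {e : S} (he : IsIdem e) : e⁻¹ = e := by
  have h : e * e * e = e := by rw [he, he]
  exact (inv_unique e e h h).symm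

lemma isg_idem_mul_inv (s : S) : IsIdem (s * s⁻¹) := by
  show s * s⁻¹ * (s * s⁻¹) = s * s⁻¹
  rw [← mul_assoc, mul_inv_mul]

lemma isg_idem_inv_mul (s : S) : IsIdem (s⁻¹ * s) := by
  show s⁻¹ * s * (s⁻¹ * s) = s⁻¹ * s
  rw [← mul_assoc, inv_mul_inv]

lemma isg_mul_inv_comm (hA : ∀ a b : A, a * b = b * a) (a b : A) :
    (a * b)⁻¹ = a⁻¹ * b⁻¹ := by
  haveI : Std.Associative (α := A) (· * ·) := ⟨mul_assoc⟩
  haveI : Std.Commutative (α := A) (· * ·) := ⟨hA⟩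
  symm
  apply InverseSemigroup.inv_unique
  · have h : a * b * (a⁻¹ * b⁻¹) * (a * b) = (a * a⁻¹ * a) * (b * b⁻¹ * b) := by ac_rfl
    rw [h, mul_inv_mul, mul_inv_mul]
  · have h : a⁻¹ * b⁻¹ * (a * b) * (a⁻¹ * b⁻¹) = (a⁻¹ * a * a⁻¹) * (b⁻¹ * b * b⁻¹) := by ac_rfl
    rw [h, inv_mul_inv, inv_mul_inv]

lemma natle_inv (hA : ∀ a b : A, a * b = b * a) {a b : A} (h : NatLe a b) :
    NatLe a⁻¹ b⁻¹ := by
  obtain ⟨f, hf, rfl⟩ := h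
  exact ⟨f, hf, by rw [isg_mul_inv_comm hA, isg_idem_inv hf]⟩

lemma isc0_inv (hA : ∀ a b : A, a * b = b * a) (M : SMod S A) {h : S → A}
    (hh : IsC0 M h) : IsC0 M (fun e => (h e)⁻¹) := by
  constructor
  · intro e he
    simp only [isg_inv_inv]
    rw [hA, hh.1 e he]
  · intro e e' he he' hle
    exact natle_inv hA (hh.2 e e' he he' hle)

lemma alpha_mul_cocycle (M : SMod S A) {g : S → A} (hg : IsZ1 M g) (s : S) :
    M.α (s * s⁻¹) * g s = g s := by
  rw [← hg.1 s, mul_assoc]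
  have : (g s)⁻¹ * g s * (g s)⁻¹ = (g s)⁻¹ := InverseSemigroup.inv_mul_inv (g s)
  calc g s * ((g s)⁻¹ * g s) = g s * (g s)⁻¹ * g s := by rw [mul_assoc]
    _ = g s := InverseSemigroup.mul_inv_mul (g s)

/-- key computation: the conjugated splitting value. -/
lemma key_comp (hA : ∀ a b : A, a * b = b * a) (M : SMod S A) {g : S → A}
    (hg : IsZ1 M g) (h : S → A) (s : S) :
    cp0mul M (cp0mul M (h (s * s⁻¹), s * s⁻¹) (g s, s))
        (cp0inv M (h (s⁻¹ * s), s⁻¹ * s))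
      = (g s * M.lam s ((h (s⁻¹ * s))⁻¹) * ((h (s * s⁻¹))⁻¹)⁻¹, s) := by
  haveI : Std.Associative (α := A) (· * ·) := ⟨mul_assoc⟩
  haveI : Std.Commutative (α := A) (· * ·) := ⟨hA⟩
  have he2 : (s⁻¹ * s)⁻¹ = s⁻¹ * s := isg_idem_inv (isg_idem_inv_mul s)
  have hs1 : s * s⁻¹ * s = s := mul_inv_mul s
  have hs2 : s * (s⁻¹ * s) = s := by rw [← mul_assoc, mul_inv_mul]
  simp only [cp0mul, cp0inv, he2]
  refine Prod.ext ?_ ?_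
  · show h (s * s⁻¹) * M.lam (s * s⁻¹) (g s) *
        M.lam (s * s⁻¹ * s) (M.lam (s⁻¹ * s) ((h (s⁻¹ * s))⁻¹)) = _
    rw [M.lam_idem _ (isg_idem_mul_inv s), hs1, M.lam_comp, hs2, isg_inv_inv]
    have h1 : h (s * s⁻¹) * (M.α (s * s⁻¹) * g s) * M.lam s ((h (s⁻¹ * s))⁻¹)
        = M.α (s * s⁻¹) * g s * M.lam s ((h (s⁻¹ * s))⁻¹) * h (s * s⁻¹) := by ac_rfl
    rw [← mul_assoc (h (s * s⁻¹)), mul_assoc (h (s*s⁻¹)) (M.α (s*s⁻¹)),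
      ← mul_assoc (h (s * s⁻¹))] at h1 ⊢
    rw [h1, alpha_mul_cocycle M hg]
  · show s * s⁻¹ * s * (s⁻¹ * s) = s
    rw [hs1, hs2]

lemma main_iff (hA : ∀ a b : A, a * b = b * a) (M : SMod S A)
    (g g' : S → A) (hg : IsZ1 M g) (_hg' : IsZ1 M g') :
    C0Equiv M (fun s => (g s, s)) (fun s => (g' s, s)) ↔ B1Equiv M g g' := by
  constructor
  · rintro ⟨h, hh, heq⟩
    refine ⟨fun e => (h e)⁻¹, isc0_inv hA M hh, fun s => ?_⟩
    have := heq s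
    rw [key_comp hA M hg h s] at this
    exact congrArg Prod.fst this
  · rintro ⟨p, hp, heq⟩
    refine ⟨fun e => (p e)⁻¹, isc0_inv hA M hp, fun s => ?_⟩
    rw [key_comp hA M hg (fun e => (p e)⁻¹) s]
    simp only [isg_inv_inv]
    exact Prod.ext (heq s) rfl

lemma splitting_of_z1 (M : SMod S A) {g : S → A} (hg : IsZ1 M g) :
    IsSplitting M (fun s => (g s, s)) := by
  refine ⟨fun s => rfl, hg.1, fun s t => Prod.ext (hg.2 s t) rfl, fun e he => ?_⟩
  show (g e * M.lam e (g e), e * e) = (g e, e)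
  refine Prod.ext ?_ he
  show g e * M.lam e (g e) = g e
  rw [← hg.2 e e, he]

lemma z1_of_splitting (M : SMod S A) {K : S → A × S} (hK : IsSplitting M K) :
    IsZ1 M (fun s => (K s).1) := by
  refine ⟨hK.2.1, fun s t => ?_⟩
  have := congrArg Prod.fst (hK.2.2.1 s t)
  simpa [cp0mul, hK.1 s] using this

lemma splitting_eq {K : S → A × S} (hK : ∀ s : S, (K s).2 = s) :
    (fun s => ((K s).1, s)) = K := by
  funext s
  exact Prod.ext rfl (hK s).symm

end Helpers

/-- For splittings `k, k'` of `A ∗_{(α,λ)} S` corresponding to cocycles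
`g, g' ∈ Z¹(S¹,A¹)` via `k(s) = g(s)δ_s`, `k'` is `C⁰_≤`-equivalent to `k`
iff `g'` and `g` differ by an element of `B¹_≤(S¹,A¹)`.  Consequently the
`C⁰_≤`-equivalence classes of splittings are in bijection with
`H¹_≤(S¹,A¹) = Z¹/B¹_≤`. -/
theorem stmt17 {S A : Type*} [InverseSemigroup S] [InverseSemigroup A]
    (hA : ∀ a b : A, a * b = b * a) (M : SMod S A) :
    (∀ g g' : S → A, IsZ1 M g → IsZ1 M g' →
      (C0Equiv M (fun s => (g s, s)) (fun s => (g' s, s)) ↔ B1Equiv M g g')) ∧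
    Nonempty
      (Quot (fun K K' : {K : S → A × S // IsSplitting M K} => C0Equiv M K.1 K'.1) ≃
       Quot (fun g g' : {g : S → A // IsZ1 M g} => B1Equiv M g.1 g'.1))  := by
  have main := main_iff hA M
  refine ⟨fun g g' hg hg' => main g g' hg hg', ?_⟩
  let E : {K : S → A × S // IsSplitting M K} ≃ {g : S → A // IsZ1 M g} :=
    { toFun := fun K => ⟨fun s => (K.1 s).1, z1_of_splitting M K.2⟩
      invFun := fun g => ⟨fun s => (g.1 s, s), splitting_of_z1 M g.2⟩
      left_inv := fun K => Subtype.ext (splitting_eq K.2.1)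
      right_inv := fun g => rfl }
  refine ⟨Quot.congr E fun K K' => ?_⟩
  have h1 : C0Equiv M K.1 K'.1 ↔
      C0Equiv M (fun s => ((K.1 s).1, s)) (fun s => ((K'.1 s).1, s)) := by
    rw [splitting_eq K.2.1, splitting_eq K'.2.1]
  rw [h1]
  exact main _ _ (z1_of_splitting M K.2) (z1_of_splitting M K'.2)
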